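/- arXiv:2312.14752 — 4 statements merged into one kernel-verified Lean document; each statement's English description precedes it below -/
import Mathlib

section
/- Let φ be a continuous flow of ℝ on a topological space α and let K₁ ⊆ α be a compact subset satisfying Axiom (ii). Then the flow is free on the set V of points whose trajectory meets the complement of K₁: for every point p ∈ α such that φ(u, p) ∉ K₁ for some u ∈ ℝ, and for every real number s ≠ 0, one has φ(s, p) ≠ p. -/
/-- If `φ` is a continuous flow of `ℝ` on a topological space `α` and `K₁` is a
compact subset satisfying Axiom (ii), then the flow is free on the set of points
whose trajectory leaves `K₁`: if `φ u p ∉ K₁` for some `u`, then `φ s p ≠ p` for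
every `s ≠ 0`. -/
theorem stmt_8 {α : Type*} [TopologicalSpace α]
    (φ : ℝ → α → α)
    (hcont : Continuous fun q : ℝ × α => φ q.1 q.2)
    (hzero : ∀ z : α, φ 0 z = z)
    (hadd : ∀ (s t : ℝ) (z : α), φ (s + t) z = φ s (φ t z))
    (K₁ : Set α) (hK₁ : IsCompact K₁)
    (axiom2 : ∀ (z : ℕ → α) (s : ℕ → ℝ),
      (∀ n, z n ∉ K₁) →
      (∃ p, Filter.Tendsto z Filter.atTop (nhds p)) →
      (∃ q, Filter.Tendsto (fun n => φ (s n) (z n)) Filter.atTop (nhds q)) →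
      BddAbove (Set.range s)) :
    ∀ p : α, (∃ u : ℝ, φ u p ∉ K₁) → ∀ s : ℝ, s ≠ 0 → φ s p ≠ p := by
  rintro p ⟨u, hu⟩ s hs hsp
  -- φ (-s) p = p as well
  have hneg : φ (-s) p = p := by
    have := hadd (-s) s p
    rw [hsp, neg_add_cancel, hzero] at this
    exact this.symm
  -- pick t > 0 with φ t p = p
  obtain ⟨t, ht, htp⟩ : ∃ t : ℝ, 0 < t ∧ φ t p = p := by
    rcases lt_or_gt_of_ne hs with h | h
    · exact ⟨-s, by linarith, hneg⟩
    · exact ⟨s, h, hsp⟩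
  have hnt : ∀ n : ℕ, φ (n * t) p = p := by
    intro n
    induction n with
    | zero => simpa using hzero p
    | succ k ih =>
      have : ((k : ℝ) + 1) * t = t + k * t := by ring
      rw [Nat.cast_succ, this, hadd, ih, htp]
  have key : ∀ n : ℕ, φ ((n : ℝ) * t) (φ u p) = φ u p := by
    intro n
    rw [← hadd, add_comm, hadd, hnt]
  have hbdd := axiom2 (fun _ => φ u p) (fun n => (n : ℝ) * t)
    (fun _ => hu) ⟨φ u p, tendsto_const_nhds⟩
    ⟨φ u p, by simpa [key] using (tendsto_const_nhds : Filter.Tendsto (fun _ : ℕ => φ u p) Filter.atTop (nhds (φ u p)))⟩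
  obtain ⟨B, hB⟩ := hbdd
  obtain ⟨n, hn⟩ := exists_nat_gt (B / t)
  have : (n : ℝ) * t ≤ B := hB ⟨n, rfl⟩
  exact absurd ((le_div_iff₀ ht).mpr this) (not_le.mpr hn)
end

section
/- Let φ be a continuous flow of ℝ on a Hausdorff topological space α and let K₁ ⊆ α be a compact subset satisfying Axiom (ii). Then the flow acts properly on the set of points whose trajectory meets the complement of K₁, in the following sequential sense: if (z_n) is a sequence in α converging to a point p, (s_n) is a sequence of reals such that (φ(s_n, z_n)) converges to a point q, and there exist u, v ∈ ℝ with φ(u, p) ∉ K₁ and φ(v, q) ∉ K₁, then (s_n) has a convergent subsequence, i.e., there exist a strictly increasing function σ : ℕ → ℕ and a real number l such that s_{σ(k)} → l as k → ∞. -/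
/-- If `φ` is a continuous flow of `ℝ` on a Hausdorff space `α` and `K₁` is a
compact subset satisfying Axiom (ii), then the flow acts properly, in the
sequential sense, on the set of points whose trajectory leaves `K₁`. -/
theorem stmt_9 {α : Type*} [TopologicalSpace α] [T2Space α]
    (φ : ℝ → α → α)
    (hcont : Continuous fun q : ℝ × α => φ q.1 q.2)
    (hzero : ∀ z : α, φ 0 z = z)
    (hadd : ∀ (s t : ℝ) (z : α), φ (s + t) z = φ s (φ t z))
    (K₁ : Set α) (hK₁ : IsCompact K₁)
    (axiom2 : ∀ (z : ℕ → α) (s : ℕ → ℝ),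
      (∀ n, z n ∉ K₁) →
      (∃ p, Filter.Tendsto z Filter.atTop (nhds p)) →
      (∃ q, Filter.Tendsto (fun n => φ (s n) (z n)) Filter.atTop (nhds q)) →
      BddAbove (Set.range s)) :
    ∀ (z : ℕ → α) (s : ℕ → ℝ) (p q : α),
      Filter.Tendsto z Filter.atTop (nhds p) →
      Filter.Tendsto (fun n => φ (s n) (z n)) Filter.atTop (nhds q) →
      (∃ u : ℝ, φ u p ∉ K₁) →
      (∃ v : ℝ, φ v q ∉ K₁) →
      ∃ σ : ℕ → ℕ, StrictMono σ ∧
        ∃ l : ℝ, Filter.Tendsto (fun k => s (σ k)) Filter.atTop (nhds l) := by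
  rintro z s p q hz hsz ⟨u, hu⟩ ⟨v, hv⟩
  have hK₁c : IsOpen K₁ᶜ := hK₁.isClosed.isOpen_compl
  have hφu : ∀ t : ℝ, Continuous fun x : α => φ t x := fun t =>
    hcont.comp (continuous_const.prodMk continuous_id)
  -- eventually φ u (z n) ∉ K₁
  have h1 : Filter.Tendsto (fun n => φ u (z n)) Filter.atTop (nhds (φ u p)) :=
    ((hφu u).tendsto p).comp hz
  have h2 : Filter.Tendsto (fun n => φ v (φ (s n) (z n))) Filter.atTop (nhds (φ v q)) :=
    ((hφu v).tendsto q).comp hsz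
  have he1 : ∀ᶠ n in Filter.atTop, φ u (z n) ∈ K₁ᶜ := h1.eventually (hK₁c.eventually_mem hu)
  obtain ⟨N₁, hN₁⟩ := Filter.eventually_atTop.mp he1
  have he2 : ∀ᶠ n in Filter.atTop, φ v (φ (s n) (z n)) ∈ K₁ᶜ := h2.eventually (hK₁c.eventually_mem hv)
  obtain ⟨N₂, hN₂⟩ := Filter.eventually_atTop.mp he2
  set N := max N₁ N₂ with hN
  have htail : Filter.Tendsto (fun n : ℕ => n + N) Filter.atTop Filter.atTop :=
    Filter.tendsto_add_atTop_nat N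
  -- upper bound on the tail of s
  have hub : ∃ M, ∀ n, s (n + N) ≤ M := by
    have hbdd : BddAbove (Set.range fun n => s (n + N) - u) := by
      apply axiom2 (fun n => φ u (z (n + N))) (fun n => s (n + N) - u)
      · intro n; exact hN₁ (n + N) (le_trans (le_max_left _ _) (Nat.le_add_left N n))
      · exact ⟨φ u p, h1.comp htail⟩
      · refine ⟨q, ?_⟩
        have : (fun n => φ (s (n + N) - u) (φ u (z (n + N)))) =
            fun n => φ (s (n + N)) (z (n + N)) := by
          funext n; rw [← hadd, sub_add_cancel]
        rw [this]; exact hsz.comp htail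
    obtain ⟨M, hM⟩ := hbdd
    refine ⟨M + u, fun n => ?_⟩
    have := hM (Set.mem_range_self n)
    linarith
  -- lower bound on the tail of s
  have hlb : ∃ m, ∀ n, m ≤ s (n + N) := by
    have hbdd : BddAbove (Set.range fun n => -(v + s (n + N))) := by
      apply axiom2 (fun n => φ v (φ (s (n + N)) (z (n + N)))) (fun n => -(v + s (n + N)))
      · intro n; exact hN₂ (n + N) (le_trans (le_max_right _ _) (Nat.le_add_left N n))
      · exact ⟨φ v q, h2.comp htail⟩
      · refine ⟨p, ?_⟩
        have : (fun n => φ (-(v + s (n + N))) (φ v (φ (s (n + N)) (z (n + N))))) =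
            fun n => z (n + N) := by
          funext n
          rw [← hadd, ← hadd]
          have h0 : -(v + s (n + N)) + v + s (n + N) = 0 := by ring
          rw [h0, hzero]
        rw [this]; exact hz.comp htail
    obtain ⟨M, hM⟩ := hbdd
    exact ⟨-M - v, fun n => by
      have : -(v + s (n + N)) ≤ M := hM (Set.mem_range_self n)
      linarith⟩
  obtain ⟨M, hM⟩ := hub
  obtain ⟨m, hm⟩ := hlb
  have hbdd : Bornology.IsBounded (Set.Icc m M) := Metric.isBounded_Icc m M
  obtain ⟨l, -, σ', hσ', hconv⟩ :=
    tendsto_subseq_of_bounded hbdd (x := fun n => s (n + N)) (fun n => ⟨hm n, hM n⟩)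
  refine ⟨fun k => σ' k + N, fun a b hab => by simpa using hσ' hab, l, ?_⟩
  exact hconv
end

section
/- Let φ be a continuous flow of ℝ on a Hausdorff topological space α and let K₁ ⊆ α be a compact subset satisfying Axiom (ii). Then all limit points of trajectories at time −∞ lie in K₁: for every z ∈ α, every point p ∈ α, and every sequence (s_n) of reals with s_n → −∞, if φ(s_n, z) → p as n → ∞, then p ∈ K₁. -/
/-- If `φ` is a continuous flow of `ℝ` on a Hausdorff space `α` and `K₁` is a
compact subset satisfying Axiom (ii), then all limit points of trajectories at
time `-∞` lie in `K₁`. -/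
theorem stmt_10 {α : Type*} [TopologicalSpace α] [T2Space α]
    (φ : ℝ → α → α)
    (hcont : Continuous fun q : ℝ × α => φ q.1 q.2)
    (hzero : ∀ z : α, φ 0 z = z)
    (hadd : ∀ (s t : ℝ) (z : α), φ (s + t) z = φ s (φ t z))
    (K₁ : Set α) (hK₁ : IsCompact K₁)
    (axiom2 : ∀ (z : ℕ → α) (s : ℕ → ℝ),
      (∀ n, z n ∉ K₁) →
      (∃ p, Filter.Tendsto z Filter.atTop (nhds p)) →
      (∃ q, Filter.Tendsto (fun n => φ (s n) (z n)) Filter.atTop (nhds q)) →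
      BddAbove (Set.range s)) :
    ∀ (z p : α) (s : ℕ → ℝ),
      Filter.Tendsto s Filter.atTop Filter.atBot →
      Filter.Tendsto (fun n => φ (s n) z) Filter.atTop (nhds p) →
      p ∈ K₁ := by
  intro z p s hs hφ
  by_contra hp
  have hclosed : IsClosed K₁ := hK₁.isClosed
  have hmem : ∀ᶠ n in Filter.atTop, φ (s n) z ∉ K₁ := by
    have := hφ.eventually (hclosed.isOpen_compl.mem_nhds hp)
    exact this
  obtain ⟨N, hN⟩ := Filter.eventually_atTop.1 hmem
  set w : ℕ → α := fun n => φ (s (n + N)) z with hw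
  set t : ℕ → ℝ := fun n => -(s (n + N)) with ht
  have hbdd : BddAbove (Set.range t) := by
    apply axiom2 w t
    · intro n; exact hN (n + N) (Nat.le_add_left N n)
    · exact ⟨p, hφ.comp (Filter.tendsto_atTop_atTop.2 fun b => ⟨b, fun a ha => le_add_right ha⟩)⟩
    · refine ⟨z, ?_⟩
      have : ∀ n, φ (t n) (w n) = z := by
        intro n
        rw [hw, ht]
        rw [← hadd, neg_add_cancel, hzero]
      simp only [this]
      exact tendsto_const_nhds
  obtain ⟨C, hC⟩ := hbdd
  have : Filter.Tendsto t Filter.atTop Filter.atTop := by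
    apply Filter.Tendsto.comp (Filter.tendsto_neg_atBot_atTop) 
    exact hs.comp (Filter.tendsto_atTop_atTop.2 fun b => ⟨b, fun a ha => le_add_right ha⟩)
  obtain ⟨n, hn⟩ := (Filter.tendsto_atTop.1 this (C + 1)).exists
  have := hC (Set.mem_range_self n)
  linarith
end

section
/- Let φ be a continuous flow of ℝ on a Hausdorff topological space α and let K₁ ⊆ α be a compact subset satisfying Axiom (i) and Axiom (ii). Then every backward trajectory enters every open neighborhood of K₁: for every open set U ⊆ α with K₁ ⊆ U and every z ∈ α, there exists a real number s < 0 with φ(s, z) ∈ U. -/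
/-- If `φ` is a continuous flow of `ℝ` on a Hausdorff space `α` and `K₁` is a
compact subset satisfying Axioms (i) and (ii), then every backward trajectory
enters every open neighborhood of `K₁`. -/
theorem stmt_11 {α : Type*} [TopologicalSpace α] [T2Space α]
    (φ : ℝ → α → α)
    (hcont : Continuous fun q : ℝ × α => φ q.1 q.2)
    (hzero : ∀ z : α, φ 0 z = z)
    (hadd : ∀ (s t : ℝ) (z : α), φ (s + t) z = φ s (φ t z))
    (K₁ : Set α) (hK₁ : IsCompact K₁)
    (axiom1 : ∀ z : ℕ → α, ∃ S : ℕ → ℝ, (∀ n, S n < 0) ∧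
      ∀ s : ℕ → ℝ, (∀ n, s n < S n) →
        ∃ σ : ℕ → ℕ, StrictMono σ ∧
          ∃ p : α, Filter.Tendsto (fun k => φ (s (σ k)) (z (σ k))) Filter.atTop (nhds p))
    (axiom2 : ∀ (z : ℕ → α) (s : ℕ → ℝ),
      (∀ n, z n ∉ K₁) →
      (∃ p, Filter.Tendsto z Filter.atTop (nhds p)) →
      (∃ q, Filter.Tendsto (fun n => φ (s n) (z n)) Filter.atTop (nhds q)) →
      BddAbove (Set.range s)) :
    ∀ U : Set α, IsOpen U → K₁ ⊆ U → ∀ z : α, ∃ s : ℝ, s < 0 ∧ φ s z ∈ U := by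
  intro U hU hKU z
  by_contra h
  push_neg at h
  obtain ⟨S, hSneg, hS⟩ := axiom1 (fun _ => z)
  set s : ℕ → ℝ := fun n => S n - (n + 1) with hs_def
  have hs : ∀ n, s n < S n := by
    intro n
    have : (0 : ℝ) < n + 1 := by positivity
    simp only [hs_def]
    linarith
  obtain ⟨σ, hσ, p, hp⟩ := hS s hs
  have hsneg : ∀ k, s (σ k) < 0 := fun k => (hs _).trans (hSneg _)
  have hw : ∀ k, φ (s (σ k)) z ∉ K₁ := fun k hmem => h _ (hsneg k) (hKU hmem)
  have hconst : (fun k => φ (-(s (σ k))) (φ (s (σ k)) z)) = fun _ => z := by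
    funext k
    rw [← hadd, neg_add_cancel, hzero]
  have hbdd := axiom2 (fun k => φ (s (σ k)) z) (fun k => -(s (σ k))) hw ⟨p, hp⟩
    ⟨z, by rw [hconst]; exact tendsto_const_nhds⟩
  obtain ⟨B, hB⟩ := hbdd
  obtain ⟨k, hk⟩ := exists_nat_gt B
  have h1 : -(s (σ k)) ≤ B := hB ⟨k, rfl⟩
  have h2 : (k : ℝ) ≤ σ k := by exact_mod_cast hσ.id_le k
  have h3 : -(s (σ k)) = -(S (σ k)) + (σ k + 1) := by simp [hs_def]; ring
  have h4 : (0 : ℝ) < -(S (σ k)) := by linarith [hSneg (σ k)]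
  linarith
end
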